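/- Let n ≥ 2, let A be a real n×n singular irreducible M-matrix, and let U_G be the FSAI upper triangular factor associated with an admissible pattern S_U. Then U_G is entrywise nonnegative and nonsingular (invertible). -/

import Mathlib

open Matrix

/-- The spectral radius of a real matrix: the maximum modulus of its complex
eigenvalues (supremum of moduli of elements of the complex spectrum). -/
noncomputable def specRad {n : ℕ} (B : Matrix (Fin n) (Fin n) ℝ) : ℝ :=
  sSup ((fun z : ℂ => ‖z‖) '' spectrum ℂ (B.map Complex.ofReal))

/-- A real square matrix is a Z-matrix if its off-diagonal entries are nonpositive. -/
def IsZMatrix {n : ℕ} (A : Matrix (Fin n) (Fin n) ℝ) : Prop :=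
  ∀ i j, i ≠ j → A i j ≤ 0

/-- A Z-matrix `A` is a nonsingular M-matrix if `A = s • 1 - B` with `B`
entrywise nonnegative and `s > ρ(B)`. -/
def IsNonsingularMMatrix {n : ℕ} (A : Matrix (Fin n) (Fin n) ℝ) : Prop :=
  IsZMatrix A ∧ ∃ (s : ℝ) (B : Matrix (Fin n) (Fin n) ℝ),
    (∀ i j, 0 ≤ B i j) ∧ specRad B < s ∧ A = s • (1 : Matrix (Fin n) (Fin n) ℝ) - B

/-- A Z-matrix `A` is a singular M-matrix if `A = ρ(B) • 1 - B` with `B`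
entrywise nonnegative. -/
def IsSingularMMatrix {n : ℕ} (A : Matrix (Fin n) (Fin n) ℝ) : Prop :=
  IsZMatrix A ∧ ∃ B : Matrix (Fin n) (Fin n) ℝ,
    (∀ i j, 0 ≤ B i j) ∧ A = specRad B • (1 : Matrix (Fin n) (Fin n) ℝ) - B

/-- A matrix is irreducible if its directed graph (edge `i → j` iff `A i j ≠ 0`)
is strongly connected. -/
def IsIrreducibleMatrix {n : ℕ} (A : Matrix (Fin n) (Fin n) ℝ) : Prop :=
  ∀ i j : Fin n, Relation.ReflTransGen (fun a b : Fin n => A a b ≠ 0) i j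

/-- Lower triangular real matrix. -/
def IsLowerTri {n : ℕ} (L : Matrix (Fin n) (Fin n) ℝ) : Prop :=
  ∀ i j : Fin n, i < j → L i j = 0

/-- Upper triangular real matrix. -/
def IsUpperTri {n : ℕ} (U : Matrix (Fin n) (Fin n) ℝ) : Prop :=
  ∀ i j : Fin n, j < i → U i j = 0

/-- `L` is an FSAI lower triangular factor of `A` for the pattern `S`:
`L` is lower triangular, vanishes off the pattern, and `(L * A) i j = δ i j`
on the pattern. -/
def IsFSAILowerFactor {n : ℕ} (A L : Matrix (Fin n) (Fin n) ℝ)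
    (S : Set (Fin n × Fin n)) : Prop :=
  IsLowerTri L ∧ (∀ p : Fin n × Fin n, p ∉ S → L p.1 p.2 = 0) ∧
    ∀ p : Fin n × Fin n, p ∈ S → (L * A) p.1 p.2 = if p.1 = p.2 then 1 else 0

/-- `U` is an FSAI upper triangular factor of `A` for the pattern `S`:
`U` is upper triangular, vanishes off the pattern, and `(A * U) i j = δ i j`
on the pattern. -/
def IsFSAIUpperFactor {n : ℕ} (A U : Matrix (Fin n) (Fin n) ℝ)
    (S : Set (Fin n × Fin n)) : Prop :=
  IsUpperTri U ∧ (∀ p : Fin n × Fin n, p ∉ S → U p.1 p.2 = 0) ∧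
    ∀ p : Fin n × Fin n, p ∈ S → (A * U) p.1 p.2 = if p.1 = p.2 then 1 else 0

/-!
Write `A = ρ(B) • 1 - B` with `B ≥ 0` irreducible and let `u` be column `j` of `U`. The pattern
misses some row `i₀` of column `j`, so `u i₀ = 0`, and `(A *ᵥ u) i = δ i j ≥ 0` wherever
`u i ≠ 0`. Hence the negative part `x = u⁻` satisfies `ρ(B) • x ≤ B *ᵥ x` and `x i₀ = 0`.
This forces `x = 0`, because for irreducible `B ≥ 0` a nonzero `x ≥ 0` with a zero entry and
`c • x ≤ B *ᵥ x` has `c < ρ(B)`: the defect `B *ᵥ x - c • x` is nonzero (nonnegative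
eigenvectors of `B` are positive), a power `T` of `1 + B` makes it positive, and `z = T *ᵥ x`
then satisfies `(c + ε) • z ≤ B *ᵥ z`, whence `c + ε ≤ ρ(B)` by Gelfand's formula.
So `U ≥ 0`; then `(A * U) j j = 1` and the sign pattern of `A` give `U j j > 0`, and `U` is
upper triangular.
-/

open Filter Topology

lemma exists_pos_smul_le {ι : Type*} [Finite ι] (u : ι → ℝ) {v : ι → ℝ} (hv : ∀ i, 0 < v i) :
    ∃ ε : ℝ, 0 < ε ∧ ε • u ≤ v := by
  have hsmall : ∀ᶠ ε in 𝓝 (0 : ℝ), ∀ i, ε * u i < v i :=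
    eventually_all.2 fun i =>
      ((continuous_mul_const (u i)).tendsto' 0 0 (zero_mul _)).eventually_lt_const (hv i)
  obtain ⟨ε, hε, hεpos⟩ := ((hsmall.filter_mono nhdsWithin_le_nhds).and
    (self_mem_nhdsWithin (s := Set.Ioi (0 : ℝ)))).exists
  exact ⟨ε, hεpos, fun i => (hε i).le⟩

namespace Matrix

variable {ι : Type*} [Fintype ι] {B : Matrix ι ι ℝ}

lemma mulVec_mono_of_nonneg (hB : ∀ i j, 0 ≤ B i j) {u v : ι → ℝ} (huv : u ≤ v) :
    B *ᵥ u ≤ B *ᵥ v :=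
  fun i => Finset.sum_le_sum fun l _ => mul_le_mul_of_nonneg_left (huv l) (hB i l)

lemma mulVec_nonneg_of_nonneg (hB : ∀ i j, 0 ≤ B i j) {v : ι → ℝ} (hv : 0 ≤ v) :
    0 ≤ B *ᵥ v := by
  simpa using mulVec_mono_of_nonneg hB hv

lemma mulVec_apply_pos (hB : ∀ i j, 0 ≤ B i j) {v : ι → ℝ} (hv : 0 ≤ v) {a b : ι}
    (hab : 0 < B a b) (hvb : 0 < v b) : 0 < (B *ᵥ v) a :=
  (mul_pos hab hvb).trans_le <| Finset.single_le_sum (f := fun l => B a l * v l)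
    (fun l _ => mul_nonneg (hB a l) (hv l)) (Finset.mem_univ b)

variable [DecidableEq ι]

lemma pow_one_add_mulVec_succ (x : ι → ℝ) (m : ℕ) :
    (1 + B) ^ (m + 1) *ᵥ x = (1 + B) ^ m *ᵥ x + B *ᵥ ((1 + B) ^ m *ᵥ x) := by
  rw [pow_succ', ← mulVec_mulVec, add_mulVec, one_mulVec]

lemma monotone_pow_one_add_mulVec (hB : ∀ i j, 0 ≤ B i j) {x : ι → ℝ} (hx : 0 ≤ x) :
    Monotone fun m : ℕ => (1 + B) ^ m *ᵥ x := by
  have hB1 : ∀ i j, 0 ≤ (1 + B) i j := fun i j =>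
    add_nonneg (by rw [one_apply]; split_ifs <;> norm_num) (hB i j)
  refine monotone_nat_of_le_succ fun m => ?_
  rw [pow_one_add_mulVec_succ]
  exact le_add_of_nonneg_right <| mulVec_nonneg_of_nonneg hB <|
    mulVec_nonneg_of_nonneg (pow_apply_nonneg hB1 m) hx

lemma pow_smul_le_pow_mulVec (hB : ∀ i j, 0 ≤ B i j) {x : ι → ℝ} {c : ℝ} (hc : 0 ≤ c)
    (hcx : c • x ≤ B *ᵥ x) (k : ℕ) : c ^ k • x ≤ B ^ k *ᵥ x := by
  induction k with
  | zero => simp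
  | succ k ih =>
    calc c ^ (k + 1) • x = c ^ k • (c • x) := by rw [pow_succ, mul_smul]
      _ ≤ c ^ k • (B *ᵥ x) := smul_le_smul_of_nonneg_left hcx (pow_nonneg hc k)
      _ = B *ᵥ (c ^ k • x) := (mulVec_smul ..).symm
      _ ≤ B *ᵥ (B ^ k *ᵥ x) := mulVec_mono_of_nonneg hB ih
      _ = B ^ (k + 1) *ᵥ x := by rw [mulVec_mulVec, pow_succ']

end Matrix

section Irreducible

variable {n : ℕ} {B : Matrix (Fin n) (Fin n) ℝ}

lemma IsIrreducibleMatrix.of_offDiag {A : Matrix (Fin n) (Fin n) ℝ} (hA : IsIrreducibleMatrix A)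
    (h : ∀ a b, a ≠ b → A a b ≠ 0 → B a b ≠ 0) : IsIrreducibleMatrix B := fun i j =>
  (hA i j).lift' id fun a b hab =>
    if hab' : a = b then hab' ▸ .refl else .single (h a b hab' hab)

lemma IsIrreducibleMatrix.exists_pow_one_add_mulVec_pos (hirr : IsIrreducibleMatrix B)
    (hB : ∀ i j, 0 ≤ B i j) {x : Fin n → ℝ} (hx : 0 ≤ x) (hx0 : x ≠ 0) :
    ∃ m : ℕ, ∀ i, 0 < ((1 + B) ^ m *ᵥ x) i := by
  obtain ⟨j, hj⟩ : ∃ j, x j ≠ 0 := Function.ne_iff.1 hx0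
  have hmono := monotone_pow_one_add_mulVec hB hx
  have hge : ∀ m : ℕ, x ≤ (1 + B) ^ m *ᵥ x := fun m => by simpa using hmono m.zero_le
  have hreach : ∀ i, ∃ m : ℕ, 0 < ((1 + B) ^ m *ᵥ x) i := by
    intro i
    induction hirr i j using Relation.ReflTransGen.head_induction_on with
    | refl => exact ⟨0, by simpa using (hx j).lt_of_ne' hj⟩
    | head hab _ ih =>
      obtain ⟨m, hm⟩ := ih
      refine ⟨m + 1, ?_⟩
      rw [pow_one_add_mulVec_succ]
      exact add_pos_of_nonneg_of_pos ((hx _).trans (hge m _))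
        (mulVec_apply_pos hB (hx.trans (hge m)) ((hB _ _).lt_of_ne' hab) hm)
  choose m hm using hreach
  exact ⟨Finset.univ.sup m, fun i =>
    (hm i).trans_le (hmono (Finset.le_sup (Finset.mem_univ i)) i)⟩

lemma IsIrreducibleMatrix.pos_of_mulVec_eq_smul (hirr : IsIrreducibleMatrix B)
    (hB : ∀ i j, 0 ≤ B i j) {x : Fin n → ℝ} (hx : 0 ≤ x) (hx0 : x ≠ 0) {c : ℝ}
    (hc : B *ᵥ x = c • x) (i : Fin n) : 0 < x i := by
  obtain ⟨m, hm⟩ := hirr.exists_pow_one_add_mulVec_pos hB hx hx0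
  have hpow : ∀ k : ℕ, (1 + B) ^ k *ᵥ x = (1 + c) ^ k • x := by
    intro k
    induction k with
    | zero => simp
    | succ k ih => rw [pow_one_add_mulVec_succ, ih, mulVec_smul, hc]; module
  have hi := hm i
  rw [hpow, Pi.smul_apply, smul_eq_mul] at hi
  exact (hx i).lt_of_ne' fun h => by simp [h] at hi

end Irreducible

namespace Matrix

attribute [local instance] Matrix.linftyOpNormedAddCommGroup Matrix.linftyOpNormedRing
  Matrix.linftyOpNormedAlgebra

open scoped ENNReal

variable {ι : Type*} [Fintype ι] [DecidableEq ι] {B : Matrix ι ι ℝ}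

lemma pow_le_norm_pow_of_smul_le_mulVec (hB : ∀ i j, 0 ≤ B i j) {x : ι → ℝ} (hx : 0 ≤ x)
    (hx0 : x ≠ 0) {c : ℝ} (hc : 0 ≤ c) (hcx : c • x ≤ B *ᵥ x) (k : ℕ) : c ^ k ≤ ‖B ^ k‖ := by
  obtain ⟨j, hj⟩ : ∃ j, x j ≠ 0 := Function.ne_iff.1 hx0
  have : Nonempty ι := ⟨j⟩
  obtain ⟨i, hi⟩ := Finite.exists_max x
  have hxi : 0 < x i := ((hx j).lt_of_ne' hj).trans_le (hi j)
  have hnorm : ‖x‖ ≤ x i := (pi_norm_le_iff_of_nonneg hxi.le).2 fun l => by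
    rw [Real.norm_of_nonneg (hx l)]; exact hi l
  refine le_of_mul_le_mul_right ?_ hxi
  calc c ^ k * x i ≤ (B ^ k *ᵥ x) i := pow_smul_le_pow_mulVec hB hc hcx k i
    _ ≤ ‖B ^ k *ᵥ x‖ := (le_abs_self _).trans ((Real.norm_eq_abs _).ge.trans (norm_le_pi_norm _ i))
    _ ≤ ‖B ^ k‖ * ‖x‖ := linfty_opNorm_mulVec _ _
    _ ≤ ‖B ^ k‖ * x i := mul_le_mul_of_nonneg_left hnorm (norm_nonneg _)

lemma ofReal_le_spectralRadius_of_smul_le_mulVec (hB : ∀ i j, 0 ≤ B i j) {x : ι → ℝ}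
    (hx : 0 ≤ x) (hx0 : x ≠ 0) {c : ℝ} (hcx : c • x ≤ B *ᵥ x) :
    ENNReal.ofReal c ≤ spectralRadius ℂ (B.map Complex.ofReal) := by
  rcases lt_or_ge c 0 with hc | hc
  · simp [ENNReal.ofReal_of_nonpos hc.le]
  refine ge_of_tendsto (spectrum.pow_nnnorm_pow_one_div_tendsto_nhds_spectralRadius _) ?_
  filter_upwards [eventually_ne_atTop 0] with k hk
  have hnorm : ‖B.map Complex.ofReal ^ k‖₊ = ‖B ^ k‖₊ := by
    have hmap : B.map Complex.ofReal ^ k = (B ^ k).map Complex.ofReal :=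
      (map_pow Complex.ofRealHom.mapMatrix B k).symm
    simp [hmap, linfty_opNNNorm_def]
  calc ENNReal.ofReal c = (ENNReal.ofReal c ^ k) ^ (1 / k : ℝ) := by
        rw [one_div, ENNReal.pow_rpow_inv_natCast hk]
    _ ≤ (‖B.map Complex.ofReal ^ k‖₊ : ℝ≥0∞) ^ (1 / k : ℝ) := by
        gcongr
        rw [hnorm, ← ENNReal.ofReal_pow hc, ← enorm_eq_nnnorm, ← ofReal_norm]
        exact ENNReal.ofReal_le_ofReal (pow_le_norm_pow_of_smul_le_mulVec hB hx hx0 hc hcx k)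

end Matrix

section SpecRad

attribute [local instance] Matrix.linftyOpNormedAddCommGroup Matrix.linftyOpNormedRing
  Matrix.linftyOpNormedAlgebra

lemma specRad_nonneg {n : ℕ} (B : Matrix (Fin n) (Fin n) ℝ) : 0 ≤ specRad B :=
  Real.sSup_nonneg <| by rintro _ ⟨z, -, rfl⟩; exact norm_nonneg z

lemma spectralRadius_le_ofReal_specRad {n : ℕ} (B : Matrix (Fin n) (Fin n) ℝ) :
    spectralRadius ℂ (B.map Complex.ofReal) ≤ ENNReal.ofReal (specRad B) := by
  obtain ⟨C, hC⟩ := (spectrum.isBounded (𝕜 := ℂ) (B.map Complex.ofReal)).exists_norm_le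
  refine iSup₂_le fun μ hμ => ?_
  rw [← enorm_eq_nnnorm, ← ofReal_norm]
  exact ENNReal.ofReal_le_ofReal <|
    le_csSup ⟨C, by rintro _ ⟨z, hz, rfl⟩; exact hC z hz⟩ ⟨μ, hμ, rfl⟩

end SpecRad

section SingularMMatrix

variable {n : ℕ} {B : Matrix (Fin n) (Fin n) ℝ}

lemma le_specRad_of_smul_le_mulVec (hB : ∀ i j, 0 ≤ B i j) {x : Fin n → ℝ} (hx : 0 ≤ x)
    (hx0 : x ≠ 0) {c : ℝ} (hcx : c • x ≤ B *ᵥ x) : c ≤ specRad B :=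
  (ENNReal.ofReal_le_ofReal_iff (specRad_nonneg B)).1 <|
    (ofReal_le_spectralRadius_of_smul_le_mulVec hB hx hx0 hcx).trans
      (spectralRadius_le_ofReal_specRad B)

lemma IsIrreducibleMatrix.lt_specRad_of_smul_le_mulVec (hirr : IsIrreducibleMatrix B)
    (hB : ∀ i j, 0 ≤ B i j) {x : Fin n → ℝ} (hx : 0 ≤ x) (hx0 : x ≠ 0) {i₀ : Fin n}
    (hxi₀ : x i₀ = 0) {c : ℝ} (hcx : c • x ≤ B *ᵥ x) : c < specRad B := by
  set w := B *ᵥ x - c • x with hw_def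
  have hw : 0 ≤ w := sub_nonneg.2 hcx
  have hw0 : w ≠ 0 := fun h =>
    (hirr.pos_of_mulVec_eq_smul hB hx hx0 (sub_eq_zero.1 h) i₀).ne' hxi₀
  obtain ⟨m, hm⟩ := hirr.exists_pow_one_add_mulVec_pos hB hw hw0
  set T := (1 + B) ^ m
  set z := T *ᵥ x with hz
  have hxz : x ≤ z := by simpa using monotone_pow_one_add_mulVec hB hx m.zero_le
  have hBz : B *ᵥ z - c • z = T *ᵥ w := by
    have hcomm : B * T = T * B :=
      (((Commute.one_right B).add_right (Commute.refl B)).pow_right m).eq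
    rw [hz, hw_def, mulVec_sub, mulVec_mulVec, hcomm, ← mulVec_mulVec, mulVec_smul]
  obtain ⟨ε, hε, hεz⟩ := exists_pos_smul_le z hm
  have hcεz : (c + ε) • z ≤ B *ᵥ z := by
    rw [add_smul, ← le_sub_iff_add_le', hBz]
    exact hεz
  have := le_specRad_of_smul_le_mulVec hB (hx.trans hxz)
    (fun h => hx0 (le_antisymm (h ▸ hxz) hx)) hcεz
  linarith

lemma IsIrreducibleMatrix.nonneg_of_mulVec_apply_nonneg (hirr : IsIrreducibleMatrix B)
    (hB : ∀ i j, 0 ≤ B i j) {u : Fin n → ℝ} {i₀ : Fin n} (hu₀ : 0 ≤ u i₀)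
    (hu : ∀ i, u i < 0 → 0 ≤ ((specRad B • 1 - B) *ᵥ u) i) : 0 ≤ u := by
  by_contra hneg
  have hx0 : u⁻ ≠ 0 := by rwa [Ne, negPart_eq_zero]
  have hxi₀ : u⁻ i₀ = 0 := by simpa [Pi.negPart_apply] using hu₀
  refine (hirr.lt_specRad_of_smul_le_mulVec hB (negPart_nonneg u) hx0 hxi₀ ?_).false
  intro i
  rcases lt_or_ge (u i) 0 with hi | hi
  · have h := hu i hi
    simp only [sub_mulVec, smul_mulVec, one_mulVec, Pi.sub_apply, Pi.smul_apply,
      smul_eq_mul, sub_nonneg] at h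
    have hmono := mulVec_mono_of_nonneg hB (neg_le_negPart u) i
    simp only [Pi.smul_apply, smul_eq_mul, Pi.negPart_apply, negPart_eq_neg.2 hi.le, mulVec_neg,
      Pi.neg_apply] at hmono ⊢
    linarith
  · simpa [Pi.negPart_apply, negPart_eq_zero.2 hi] using
      mulVec_nonneg_of_nonneg hB (negPart_nonneg u) i

end SingularMMatrix

lemma IsZMatrix.apply_pos_of_mulVec_apply_pos {n : ℕ} {A : Matrix (Fin n) (Fin n) ℝ}
    (hA : IsZMatrix A) {v : Fin n → ℝ} (hv : 0 ≤ v) {j : Fin n} (h : 0 < (A *ᵥ v) j) :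
    0 < v j := by
  rw [mulVec, dotProduct] at h
  refine (hv j).lt_of_ne' fun hj => h.not_ge <| Finset.sum_nonpos fun k _ => ?_
  rcases eq_or_ne j k with rfl | hjk
  · simp [hj]
  · exact mul_nonpos_of_nonpos_of_nonneg (hA j k hjk) (hv k)

lemma exists_notMem_of_subset_upper {n : ℕ} {S : Set (Fin n × Fin n)}
    (hS : S ⊆ {p : Fin n × Fin n | p.1 ≤ p.2}) {a b : Fin n} (hb : ∀ i, i ≤ b) (hab : (a, b) ∉ S)
    (j : Fin n) : ∃ i, (i, j) ∉ S := by
  rcases eq_or_ne j b with rfl | hjb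
  · exact ⟨a, hab⟩
  · exact ⟨b, fun h => hjb ((hb j).antisymm (hS h))⟩

theorem fsai_upper_nonneg_invertible (n : ℕ) (hn : 2 ≤ n)
    (A : Matrix (Fin n) (Fin n) ℝ)
    (hA : IsSingularMMatrix A) (hirr : IsIrreducibleMatrix A)
    (S : Set (Fin n × Fin n))
    (hS1 : S ⊆ {p : Fin n × Fin n | p.1 ≤ p.2})
    (hS2 : ∀ i : Fin n, (i, i) ∈ S)
    (hS3 : ((⟨n - 2, by omega⟩ : Fin n), (⟨n - 1, by omega⟩ : Fin n)) ∉ S)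
    (U : Matrix (Fin n) (Fin n) ℝ) (hU : IsFSAIUpperFactor A U S) :
    (∀ i j, 0 ≤ U i j) ∧ IsUnit U := by
  obtain ⟨hZ, B, hB, rfl⟩ := hA
  obtain ⟨hUtri, hUS, hAU⟩ := hU
  have hBirr : IsIrreducibleMatrix B :=
    hirr.of_offDiag fun a b hab h => by simpa [one_apply_ne hab] using h
  have hcol : ∀ j, 0 ≤ fun i => U i j := fun j => by
    obtain ⟨i₀, hi₀⟩ := exists_notMem_of_subset_upper hS1
      (fun i => Fin.le_iff_val_le_val.2 (by simp only; omega)) hS3 j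
    refine hBirr.nonneg_of_mulVec_apply_nonneg hB (hUS _ hi₀).ge fun i hi => ?_
    have hiS : (i, j) ∈ S := by_contra fun h => hi.ne (hUS _ h)
    change 0 ≤ ((specRad B • 1 - B) * U) i j
    rw [hAU _ hiS]
    split_ifs <;> norm_num
  have hdiag : ∀ j, 0 < U j j := fun j =>
    hZ.apply_pos_of_mulVec_apply_pos (hcol j) <| by
      change 0 < ((specRad B • 1 - B) * U) j j
      simp [hAU _ (hS2 j)]
  refine ⟨fun i j => hcol j i, ?_⟩
  rw [isUnit_iff_isUnit_det, det_of_isUpperTriangular hUtri]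
  exact (Finset.prod_pos fun j _ => hdiag j).ne'.isUnit
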